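/- arXiv:2304.02789 — 3 statements merged into one kernel-verified Lean document; each statement's English description precedes it below -/
import Mathlib

section
/- Let p be an odd prime and x a p-adic integer with x \equiv 1 (mod p) (i.e., v_p(x-1) \ge 1). Then log_p(x) \equiv (x^p - 1)/p (mod p), i.e., p \cdot log_p(x) \equiv x^p - 1 (mod p^2). -/
/-!
Both sides are divisible by `p ^ 2`. Writing `x = 1 + t` with `‖t‖ ≤ p⁻¹`, every term `t ^ k / k`
of the logarithm series has norm at most `‖t‖`, because `‖k‖⁻¹ ≤ k ≤ p ^ (k - 1)`; hence
`‖p * log x‖ ≤ p⁻²`. On the other side `p ∣ x - 1` gives `p ^ 2 ∣ x ^ p - 1`.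
-/

/-- The `p`-adic logarithm, defined by the usual power series around `1`. -/
noncomputable def plog (p : ℕ) [Fact p.Prime] (x : ℚ_[p]) : ℚ_[p] :=
  ∑' n : ℕ, (-1) ^ n * (x - 1) ^ (n + 1) / (n + 1)

open IsUltrametricDist

namespace Padic

variable {p : ℕ} [hp : Fact p.Prime]

lemma inv_norm_natCast_le (n : ℕ) : ‖(n : ℚ_[p])‖⁻¹ ≤ n := by
  rcases eq_or_ne n 0 with rfl | hn
  · simp
  rw [norm_eq_zpow_neg_valuation (mod_cast hn), valuation_natCast, zpow_neg, inv_inv,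
    zpow_natCast]
  exact mod_cast Nat.le_of_dvd (Nat.pos_of_ne_zero hn) pow_padicValNat_dvd

lemma norm_pow_succ_div_le {t : ℚ_[p]} (ht : ‖t‖ ≤ (p : ℝ)⁻¹) (n : ℕ) :
    ‖t ^ (n + 1) / (n + 1)‖ ≤ ‖t‖ := by
  have hn : ((n : ℝ) + 1) ≤ (p : ℝ) ^ n := mod_cast Nat.lt_pow_self hp.out.one_lt
  have hinv : ‖(n : ℚ_[p]) + 1‖⁻¹ ≤ (n : ℝ) + 1 := by
    exact_mod_cast inv_norm_natCast_le (p := p) (n + 1)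
  calc ‖t ^ (n + 1) / (n + 1)‖ = ‖t‖ * (‖t‖ ^ n * ‖(n : ℚ_[p]) + 1‖⁻¹) := by
        rw [norm_div, norm_pow, pow_succ]; ring
    _ ≤ ‖t‖ * ((p : ℝ)⁻¹ ^ n * (p : ℝ) ^ n) := by
        gcongr
        exact hinv.trans hn
    _ = ‖t‖ := by rw [inv_pow, inv_mul_cancel₀ (pow_ne_zero n (mod_cast hp.out.ne_zero)), mul_one]

lemma norm_plog_le {x : ℚ_[p]} (hx : ‖x - 1‖ ≤ (p : ℝ)⁻¹) : ‖plog p x‖ ≤ ‖x - 1‖ := by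
  refine norm_tsum_le_of_forall_le fun n ↦ ?_
  rw [mul_div_assoc, norm_mul, norm_pow, norm_neg, norm_one, one_pow, one_mul]
  exact norm_pow_succ_div_le hx n

end Padic

namespace PadicInt

variable {p : ℕ} [Fact p.Prime]

lemma norm_pow_sub_one_le {x : ℤ_[p]} (hx : ‖x - 1‖ ≤ (p : ℝ)⁻¹) :
    ‖x ^ p - 1‖ ≤ (p : ℝ) ^ (-2 : ℤ) := by
  have hdvd : (p : ℤ_[p]) ∣ x - 1 := by
    rw [← pow_one (p : ℤ_[p]), ← Ideal.mem_span_singleton, ← norm_le_pow_iff_mem_span_pow]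
    simpa using hx
  have hdvd_sq := dvd_sub_pow_of_dvd_sub hdvd 1
  rw [pow_one, one_pow, ← Ideal.mem_span_singleton, ← norm_le_pow_iff_mem_span_pow] at hdvd_sq
  exact_mod_cast hdvd_sq

end PadicInt

theorem padic_log_pow_congruence_general (p : ℕ) [Fact p.Prime]
    (x : ℤ_[p]) (hx : ‖x - 1‖ ≤ ((p : ℝ))⁻¹) :
    ‖(p : ℚ_[p]) * plog p (x : ℚ_[p]) - ((x : ℚ_[p]) ^ p - 1)‖ ≤ (p : ℝ) ^ (-2 : ℤ) := by
  have hx' : ‖(x : ℚ_[p]) - 1‖ ≤ (p : ℝ)⁻¹ := by exact_mod_cast hx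
  have hlog : ‖(p : ℚ_[p]) * plog p x‖ ≤ (p : ℝ) ^ (-2 : ℤ) := by
    rw [norm_mul, Padic.norm_p, zpow_neg, zpow_two, mul_inv]
    gcongr
    exact (Padic.norm_plog_le hx').trans hx'
  have hpow : ‖(x : ℚ_[p]) ^ p - 1‖ ≤ (p : ℝ) ^ (-2 : ℤ) := by
    exact_mod_cast PadicInt.norm_pow_sub_one_le hx
  rw [sub_eq_add_neg]
  exact (norm_add_le_max _ _).trans (max_le hlog (by rwa [norm_neg]))

theorem padic_log_pow_congruence (p : ℕ) [Fact p.Prime] (hodd : Odd p)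
    (x : ℤ_[p]) (hx : ‖x - 1‖ ≤ ((p : ℝ))⁻¹) :
    ‖(p : ℚ_[p]) * plog p (x : ℚ_[p]) - ((x : ℚ_[p]) ^ p - 1)‖ ≤ (p : ℝ) ^ (-2 : ℤ) :=
  padic_log_pow_congruence_general p x hx
end

section
/- Let p \equiv 5 (mod 8) be prime. Then 2 is a quadratic non-residue mod p, and the Eisenstein congruence holds: -2 F(2) \equiv H_{(p-1)/2} (mod p), where F(2) = (2^{p-1}-1)/p is the Fermat quotient of 2 and H_{(p-1)/2} = \sum_{j=1}^{(p-1)/2} 1/j with inverses mod p. -/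
/-!
Expanding `2 ^ p = (1 + 1) ^ p` gives `2 (2 ^ (p - 1) - 1) / p = ∑_{0 < k < p} C(p, k) / p`, and
`C(p, k) / p = C(p - 1, k - 1) / k ≡ (-1) ^ (k - 1) / k (mod p)` because `C(p - 1, j) ≡ (-1) ^ j`.
So twice the Fermat quotient is the alternating sum `∑_{0 < k < p} (-1) ^ (k - 1) / k`, which is
`H_{p-1} - H_{(p-1)/2}` (the even terms `2 / (2 j)` add up to `H_{(p-1)/2}`), and `H_{p-1} ≡ 0`
by pairing `k` with `p - k`. That `2` is a non-residue is the second supplementary law.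
-/

open Finset

theorem Finset.sum_range_two_mul {M : Type*} [AddCommMonoid M] (f : ℕ → M) (m : ℕ) :
    ∑ k ∈ range (2 * m), f k = ∑ i ∈ range m, (f (2 * i) + f (2 * i + 1)) := by
  induction m with
  | zero => simp
  | succ m ih => rw [mul_add, mul_one, sum_range_succ, sum_range_succ, sum_range_succ, ih, add_assoc]

theorem sum_range_neg_one_pow_mul_inv_succ {K : Type*} [Field K] (h2 : (2 : K) ≠ 0) (m : ℕ) :
    ∑ k ∈ range (2 * m), (-1) ^ k * ((k + 1 : ℕ) : K)⁻¹ =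
      ∑ k ∈ range (2 * m), ((k + 1 : ℕ) : K)⁻¹ - ∑ i ∈ range m, ((i + 1 : ℕ) : K)⁻¹ := by
  simp only [sum_range_two_mul, ← sum_sub_distrib]
  refine sum_congr rfl fun i _ ↦ ?_
  have h_even : ((2 * i + 1 + 1 : ℕ) : K) = 2 * ((i + 1 : ℕ) : K) := by push_cast; ring
  rw [pow_succ, pow_mul, neg_one_sq, one_pow, h_even, mul_inv]
  field_simp
  ring

namespace ZMod

variable {p : ℕ} [Fact p.Prime]

theorem natCast_choose_sub_one {j : ℕ} (hj : j < p) :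
    (((p - 1).choose j : ℕ) : ZMod p) = (-1) ^ j := by
  induction j with
  | zero => simp
  | succ j ih =>
    have hp := (Fact.out : p.Prime)
    have h_pascal : p.choose (j + 1) = (p - 1).choose j + (p - 1).choose (j + 1) := by
      rw [← Nat.choose_succ_succ', Nat.sub_add_cancel hp.one_le]
    have h_zero : ((p.choose (j + 1) : ℕ) : ZMod p) = 0 :=
      (natCast_eq_zero_iff _ _).mpr (hp.dvd_choose_self j.succ_ne_zero hj)
    rw [h_pascal, Nat.cast_add, ih (by omega)] at h_zero
    linear_combination h_zero

theorem natCast_choose_succ_div_self {k : ℕ} (hk : k + 1 < p) :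
    ((p.choose (k + 1) / p : ℕ) : ZMod p) = (-1) ^ k * ((k + 1 : ℕ) : ZMod p)⁻¹ := by
  have hp := (Fact.out : p.Prime)
  have h_unit : ((k + 1 : ℕ) : ZMod p) ≠ 0 := by
    rw [Ne, natCast_eq_zero_iff]
    exact fun h ↦ (Nat.le_of_dvd k.succ_pos h).not_gt hk
  have h_absorb : p.choose (k + 1) / p * (k + 1) = (p - 1).choose k := by
    have h := Nat.add_one_mul_choose_eq (p - 1) k
    rw [Nat.sub_add_cancel hp.one_le] at h
    refine Nat.eq_of_mul_eq_mul_left hp.pos ?_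
    rw [← mul_assoc, Nat.mul_div_cancel' (hp.dvd_choose_self (by omega) hk), h]
  rw [eq_mul_inv_iff_mul_eq₀ h_unit, ← Nat.cast_mul, h_absorb, natCast_choose_sub_one (by omega)]

theorem two_ne_zero (hp2 : p ≠ 2) : (2 : ZMod p) ≠ 0 :=
  Ring.two_ne_zero (by rwa [ringChar_zmod_n])

theorem sum_range_inv_succ_eq_zero (hp2 : p ≠ 2) :
    ∑ k ∈ range (p - 1), ((k + 1 : ℕ) : ZMod p)⁻¹ = 0 := by
  have h_reflect := sum_range_reflect (fun k ↦ ((k + 1 : ℕ) : ZMod p)⁻¹) (p - 1)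
  have h_neg : ∀ k ∈ range (p - 1),
      ((p - 1 - 1 - k + 1 : ℕ) : ZMod p)⁻¹ = -((k + 1 : ℕ) : ZMod p)⁻¹ := by
    intro k hk
    rw [mem_range] at hk
    rw [show p - 1 - 1 - k + 1 = p - (k + 1) by omega, Nat.cast_sub (by omega), natCast_self,
      zero_sub, inv_neg]
  rw [sum_congr rfl h_neg, sum_neg_distrib, neg_eq_iff_add_eq_zero, ← two_mul] at h_reflect
  exact (mul_eq_zero.mp h_reflect).resolve_left (two_ne_zero hp2)

end ZMod

theorem two_mul_fermat_quotient_two {p : ℕ} (hp : p.Prime) (hp2 : p ≠ 2) :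
    2 * ((2 ^ (p - 1) - 1) / p : ℤ) = ∑ k ∈ range (p - 1), ((p.choose (k + 1) / p : ℕ) : ℤ) := by
  have h_fermat : (p : ℤ) ∣ 2 ^ (p - 1) - 1 :=
    Int.prime_dvd_pow_sub_one hp <|
      Nat.isCoprime_iff_coprime.mpr ((Nat.coprime_primes Nat.prime_two hp).mpr hp2.symm)
  have h_binom : ∑ k ∈ range (p - 1), p.choose (k + 1) + 2 = 2 ^ p := by
    obtain ⟨n, rfl⟩ : ∃ n, p = n + 1 := ⟨p - 1, by have := hp.one_le; omega⟩
    have h := Nat.sum_range_choose (n + 1)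
    rw [sum_range_succ, sum_range_succ', Nat.choose_self, Nat.choose_zero_right] at h
    rw [Nat.add_sub_cancel, ← h]
  have h_term : ∀ k ∈ range (p - 1),
      (p : ℤ) * ((p.choose (k + 1) / p : ℕ) : ℤ) = p.choose (k + 1) := by
    intro k hk
    rw [mem_range] at hk
    exact_mod_cast Nat.mul_div_cancel' (hp.dvd_choose_self (by omega) (by omega))
  refine mul_left_cancel₀ (by exact_mod_cast hp.ne_zero : (p : ℤ) ≠ 0) ?_
  rw [mul_left_comm, Int.mul_ediv_cancel' h_fermat, mul_sum, sum_congr rfl h_term]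
  have h_pow : (2 : ℤ) ^ p = 2 * 2 ^ (p - 1) := by
    rw [← pow_succ', Nat.sub_add_cancel hp.one_le]
  zify at h_binom
  linear_combination -h_binom - h_pow

theorem eisenstein_congruence_five_mod_eight (p : ℕ) [Fact p.Prime] (hp8 : p % 8 = 5) :
    ¬ IsSquare (2 : ZMod p) ∧
    (-2 : ZMod p) * (((2 ^ (p - 1) - 1) / p : ℤ) : ZMod p) =
      ∑ j ∈ Finset.Icc 1 ((p - 1) / 2), (j : ZMod p)⁻¹ := by
  have hp2 : p ≠ 2 := by omega
  refine ⟨by rw [ZMod.exists_sq_eq_two_iff hp2]; omega, ?_⟩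
  have h_alternating : (2 : ZMod p) * (((2 ^ (p - 1) - 1) / p : ℤ) : ZMod p) =
      ∑ k ∈ range (p - 1), (-1) ^ k * ((k + 1 : ℕ) : ZMod p)⁻¹ := by
    rw [← Int.cast_two, ← Int.cast_mul, two_mul_fermat_quotient_two Fact.out hp2, Int.cast_sum]
    refine sum_congr rfl fun k hk ↦ ?_
    rw [Int.cast_natCast, ZMod.natCast_choose_succ_div_self (by rw [mem_range] at hk; omega)]
  have h_half : p - 1 = 2 * ((p - 1) / 2) := by omega
  rw [h_half, sum_range_neg_one_pow_mul_inv_succ (ZMod.two_ne_zero hp2), ← h_half,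
    ZMod.sum_range_inv_succ_eq_zero hp2, range_eq_Ico, sum_Ico_add' (fun j : ℕ ↦ (j : ZMod p)⁻¹),
    zero_add, Ico_add_one_right_eq_Icc] at h_alternating
  linear_combination -h_alternating
end

section
/- For any odd prime p, the Eisenstein congruence -2 F(2) \equiv H_{(p-1)/2} (mod p) holds, where F(2) = (2^{p-1}-1)/p and H_{(p-1)/2} = \sum_{j=1}^{(p-1)/2} 1/j with inverses taken mod p. Equivalently, 2(1 - 2^{p-1}) / p \equiv \sum_{j=1}^{(p-1)/2} j^{-1} (mod p). -/
/-! Since `2 ^ p - 2 = ∑_{0<k<p} C(p,k)` and `k • C(p,k) = p • C(p-1,k-1)` with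
`C(p-1,k-1) ≡ (-1)^(k-1) mod p`, twice the Fermat quotient is `∑_{0<k<p} (-1)^(k-1)/k`
mod `p`. Adding `∑_{0<k<p} 1/k ≡ 0` (the inverses run over all nonzero residues, whose sum
vanishes for `p` odd) kills the odd terms and doubles the even ones `k = 2j`, leaving
`∑_{j ≤ (p-1)/2} 1/j`. -/

open Finset

theorem Nat.sum_Ico_choose_add_two {n : ℕ} (hn : 0 < n) :
    ∑ k ∈ Ico 1 n, n.choose k + 2 = 2 ^ n := by
  have h := Nat.sum_range_choose n
  rw [sum_range_succ, sum_range_eq_add_Ico _ hn, Nat.choose_zero_right, Nat.choose_self] at h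
  omega

theorem Finset.sum_Icc_neg_one_pow_add_one_mul {R : Type*} [CommRing R] (f : ℕ → R) (m : ℕ) :
    ∑ k ∈ Icc 1 (2 * m), ((-1) ^ k + 1) * f k = 2 * ∑ j ∈ Icc 1 m, f (2 * j) := by
  induction m with
  | zero => simp
  | succ m ih =>
    rw [sum_Icc_succ_top (by omega : 1 ≤ m + 1), show 2 * (m + 1) = 2 * m + 1 + 1 by ring,
      sum_Icc_succ_top (by omega), sum_Icc_succ_top (by omega), ih]
    have hsq : (-1 : R) ^ (2 * m) = 1 := by rw [pow_mul, neg_one_sq, one_pow]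
    simp only [pow_succ, hsq]
    ring

theorem Finset.sum_Icc_neg_one_pow_add_one_mul_inv {K : Type*} [Field K] (h2 : (2 : K) ≠ 0)
    (m : ℕ) :
    ∑ k ∈ Icc 1 (2 * m), ((-1) ^ k + 1) * (k : K)⁻¹ = ∑ j ∈ Icc 1 m, (j : K)⁻¹ := by
  rw [sum_Icc_neg_one_pow_add_one_mul, mul_sum]
  refine sum_congr rfl fun j _ => ?_
  rw [Nat.cast_mul, Nat.cast_ofNat, mul_inv, ← mul_assoc, mul_inv_cancel₀ h2, one_mul]

namespace ZMod

theorem sum_univ_eq_sum_range {M : Type*} [AddCommMonoid M] (n : ℕ) [NeZero n]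
    (f : ZMod n → M) : ∑ x, f x = ∑ k ∈ range n, f k :=
  sum_nbij' (fun x => x.val) (fun k => k) (fun x _ => mem_range.mpr x.val_lt)
    (fun _ _ => mem_univ _) (fun x _ => natCast_zmod_val x)
    (fun _ hk => val_natCast_of_lt (mem_range.mp hk)) (fun x _ => by rw [natCast_zmod_val])

variable {p : ℕ} [Fact p.Prime]

theorem sum_Ico_inv_eq_zero (hp2 : p ≠ 2) : ∑ k ∈ Ico 1 p, (k : ZMod p)⁻¹ = 0 := by
  have hp : p.Prime := Fact.out
  have hlt : 1 < p - 1 := by have := hp.two_le; omega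
  have hsum : ∑ x : ZMod p, x = 0 := by
    simpa using FiniteField.sum_pow_lt_card_sub_one (ZMod p) 1 (by rwa [ZMod.card])
  have hinv : ∑ x : ZMod p, x⁻¹ = 0 := (Equiv.sum_comp (Equiv.inv (ZMod p)) id).trans hsum
  rw [sum_univ_eq_sum_range, sum_range_eq_add_Ico _ hp.pos] at hinv
  simpa using hinv

theorem cast_choose_pred (j : ℕ) (hj : j < p) :
    (((p - 1).choose j : ℕ) : ZMod p) = (-1) ^ j := by
  have h := cast_descFactorial (p := p) hj.le
  rw [Nat.descFactorial_eq_factorial_mul_choose, Nat.cast_mul, mul_comm ((-1) ^ j)] at h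
  refine mul_left_cancel₀ ?_ h
  rw [Ne, natCast_eq_zero_iff, (Fact.out : p.Prime).dvd_factorial]
  omega

theorem cast_choose_div_self {k : ℕ} (hk0 : k ≠ 0) (hkp : k < p) :
    ((p.choose k / p : ℕ) : ZMod p) = (-1) ^ (k - 1) * (k : ZMod p)⁻¹ := by
  have hp : p.Prime := Fact.out
  have hk : (k : ZMod p) ≠ 0 := by
    rw [Ne, natCast_eq_zero_iff]; exact Nat.not_dvd_of_pos_of_lt (by omega) hkp
  have hpascal : p * (p - 1).choose (k - 1) = p * (p.choose k / p * k) := by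
    have h := Nat.add_one_mul_choose_eq (p - 1) (k - 1)
    rwa [Nat.sub_add_cancel hp.one_le, Nat.sub_add_cancel (Nat.one_le_iff_ne_zero.mpr hk0),
      ← Nat.mul_div_cancel' (hp.dvd_choose_self hk0 hkp), mul_assoc] at h
  rw [eq_mul_inv_iff_mul_eq₀ hk, ← cast_choose_pred (k - 1) (by omega),
    Nat.eq_of_mul_eq_mul_left hp.pos hpascal, Nat.cast_mul]

end ZMod

theorem two_mul_fermat_quotient_eq_sum_choose_div {p : ℕ} (hp : p.Prime) (hp2 : p ≠ 2) :
    2 * ((2 ^ (p - 1) - 1) / p : ℤ) = ∑ k ∈ Ico 1 p, ((p.choose k / p : ℕ) : ℤ) := by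
  have hp0 : (p : ℤ) ≠ 0 := by exact_mod_cast hp.ne_zero
  have hcop : IsCoprime (2 : ℤ) p :=
    Nat.isCoprime_iff_coprime.mpr ((Nat.coprime_primes Nat.prime_two hp).mpr hp2.symm)
  obtain ⟨t, ht⟩ := (Int.ModEq.pow_card_sub_one_eq_one hp hcop).symm.dvd
  have hsum : (p : ℤ) * ∑ k ∈ Ico 1 p, ((p.choose k / p : ℕ) : ℤ) = 2 ^ p - 2 := by
    rw [mul_sum, eq_sub_iff_add_eq]
    have h := Nat.sum_Ico_choose_add_two hp.pos
    zify at h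
    rw [← h]
    congr 1
    refine sum_congr rfl fun k hk => ?_
    rw [mem_Ico] at hk
    exact_mod_cast Nat.mul_div_cancel' (hp.dvd_choose_self (by omega) hk.2)
  have hpow : (2 : ℤ) ^ p = 2 * 2 ^ (p - 1) := by
    rw [← pow_succ', Nat.sub_add_cancel hp.one_le]
  rw [ht, Int.mul_ediv_cancel_left _ hp0]
  refine mul_left_cancel₀ hp0 ?_
  rw [hsum]
  linear_combination -2 * ht - hpow

theorem eisenstein_congruence (p : ℕ) [Fact p.Prime] (hodd : Odd p) :
    (-2 : ZMod p) * (((2 ^ (p - 1) - 1) / p : ℤ) : ZMod p) =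
      ∑ j ∈ Finset.Icc 1 ((p - 1) / 2), (j : ZMod p)⁻¹ := by
  obtain ⟨m, hm⟩ := hodd
  have hp2 : p ≠ 2 := by omega
  have h2 : (2 : ZMod p) ≠ 0 := Ring.two_ne_zero (by rwa [ZMod.ringChar_zmod_n])
  calc (-2 : ZMod p) * (((2 ^ (p - 1) - 1) / p : ℤ) : ZMod p)
      = -∑ k ∈ Ico 1 p, ((p.choose k / p : ℕ) : ZMod p) := by
        rw [neg_mul, ← Int.cast_two (R := ZMod p), ← Int.cast_mul,
          two_mul_fermat_quotient_eq_sum_choose_div Fact.out hp2]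
        simp only [Int.cast_sum, Int.cast_natCast]
    _ = ∑ k ∈ Ico 1 p, ((-1) ^ k + 1) * (k : ZMod p)⁻¹ := by
        simp only [add_mul, one_mul, sum_add_distrib, ZMod.sum_Ico_inv_eq_zero hp2, add_zero,
          ← sum_neg_distrib]
        refine sum_congr rfl fun k hk => ?_
        obtain ⟨j, rfl⟩ : ∃ j, k = j + 1 := ⟨k - 1, by rw [mem_Ico] at hk; omega⟩
        rw [ZMod.cast_choose_div_self j.add_one_ne_zero (mem_Ico.mp hk).2, Nat.add_sub_cancel,
          pow_succ]
        ring
    _ = ∑ j ∈ Icc 1 ((p - 1) / 2), (j : ZMod p)⁻¹ := by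
        rw [show (p - 1) / 2 = m by omega, show Ico 1 p = Icc 1 (2 * m) by
          rw [hm, Ico_add_one_right_eq_Icc], sum_Icc_neg_one_pow_add_one_mul_inv h2]
end
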